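/- Let k ≥ 1, c ≥ 1, and 0 < ε < 1/2, so that M := (1 − 2ε)·S + ε·(I + J) on the index type Fin c × Fin k is invertible. Then the exact deviation of M⁻² from ε⁻¹·M⁻¹ is supported on the projections M₂ and M₃: M⁻² − ε⁻¹·M⁻¹ = λ₂⁻¹·(λ₂⁻¹ − ε⁻¹)·M₂ + λ₃⁻¹·(λ₃⁻¹ − ε⁻¹)·M₃, where λ₂ := (1 − 2ε)·k + ε, λ₃ := k·(1 − 2ε + ε·c) + ε, M₂ := (1/k)·S − (1/(kc))·J, and M₃ := (1/(kc))·J. -/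

import Mathlib

/-!
`M₁, M₂, M₃` form a complete family of orthogonal idempotents, and `M = ε M₁ + λ₂ M₂ + λ₃ M₃`.
Products and inverses of such combinations are computed coefficientwise, so
`M⁻² − ε⁻¹ M⁻¹ = ∑ λᵢ⁻¹ (λᵢ⁻¹ − ε⁻¹) Mᵢ` with `λ₁ = ε`, and the `M₁` term vanishes.
-/

open Matrix Finset

/-- The all-ones matrix on `Fin c × Fin k`. -/
def Jmat (c k : ℕ) : Matrix (Fin c × Fin k) (Fin c × Fin k) ℝ :=
  Matrix.of fun _ _ => 1

/-- The block matrix `S = I_c ⊗ J_k`: `S ((a,p), (b,q)) = 1` iff `a = b`. -/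
def Smat (c k : ℕ) : Matrix (Fin c × Fin k) (Fin c × Fin k) ℝ :=
  Matrix.of fun p q => if p.1 = q.1 then 1 else 0

/-- The projection `M₁ = I − (1/k) S`. -/
noncomputable def M1 (c k : ℕ) : Matrix (Fin c × Fin k) (Fin c × Fin k) ℝ :=
  1 - ((k : ℝ))⁻¹ • Smat c k

/-- The projection `M₂ = (1/k) S − (1/(kc)) J`. -/
noncomputable def M2 (c k : ℕ) : Matrix (Fin c × Fin k) (Fin c × Fin k) ℝ :=
  ((k : ℝ))⁻¹ • Smat c k - ((k : ℝ) * (c : ℝ))⁻¹ • Jmat c k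

/-- The projection `M₃ = (1/(kc)) J`. -/
noncomputable def M3 (c k : ℕ) : Matrix (Fin c × Fin k) (Fin c × Fin k) ℝ :=
  ((k : ℝ) * (c : ℝ))⁻¹ • Jmat c k

/-- The matrix `M = (1 − 2ε) S + ε (I + J)`. -/
noncomputable def Mmat (c k : ℕ) (ε : ℝ) : Matrix (Fin c × Fin k) (Fin c × Fin k) ℝ :=
  (1 - 2 * ε) • Smat c k + ε • ((1 : Matrix (Fin c × Fin k) (Fin c × Fin k) ℝ) + Jmat c k)

namespace OrthogonalIdempotents

variable {R A I : Type*} [CommSemiring R] [Semiring A] [Algebra R A] [Fintype I] {e : I → A}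

theorem sum_smul_mul_sum_smul (he : OrthogonalIdempotents e) (a b : I → R) :
    (∑ i, a i • e i) * (∑ i, b i • e i) = ∑ i, (a i * b i) • e i := by
  classical
  simp only [Finset.sum_mul_sum, smul_mul_smul_comm, he.mul_eq, smul_ite, smul_zero,
    Finset.sum_ite_eq, Finset.mem_univ, if_true]

end OrthogonalIdempotents

theorem Matrix.inv_sum_smul_of_completeOrthogonalIdempotents {n K I : Type*} [Fintype n]
    [DecidableEq n] [Field K] [Fintype I] {e : I → Matrix n n K}
    (he : CompleteOrthogonalIdempotents e) {a : I → K} (ha : ∀ i, a i ≠ 0) :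
    (∑ i, a i • e i)⁻¹ = ∑ i, (a i)⁻¹ • e i :=
  inv_eq_right_inv <| by
    simp only [he.sum_smul_mul_sum_smul, mul_inv_cancel₀ (ha _), one_smul, he.complete]

theorem Smat_mul_Smat (c k : ℕ) : Smat c k * Smat c k = (k : ℝ) • Smat c k := by
  ext ⟨a, p⟩ ⟨b, q⟩
  simp [Matrix.mul_apply, Smat, Fintype.sum_prod_type, apply_ite Finset.card, mul_comm]

theorem Jmat_mul_Jmat (c k : ℕ) : Jmat c k * Jmat c k = ((k : ℝ) * c) • Jmat c k := by
  ext ⟨a, p⟩ ⟨b, q⟩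
  simp [Matrix.mul_apply, Jmat, mul_comm]

theorem Smat_mul_Jmat (c k : ℕ) : Smat c k * Jmat c k = (k : ℝ) • Jmat c k := by
  ext ⟨a, p⟩ ⟨b, q⟩
  simp only [Matrix.mul_apply, Smat, Jmat, Matrix.of_apply, Fintype.sum_prod_type, mul_one]
  simp [apply_ite Finset.card, Finset.sum_ite_eq]

theorem Jmat_mul_Smat (c k : ℕ) : Jmat c k * Smat c k = (k : ℝ) • Jmat c k := by
  ext ⟨a, p⟩ ⟨b, q⟩
  simp only [Matrix.mul_apply, Smat, Jmat, Matrix.of_apply, Fintype.sum_prod_type, one_mul]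
  simp [apply_ite Finset.card, Finset.sum_ite_eq']

noncomputable def Mprojections (c k : ℕ) : Fin 3 → Matrix (Fin c × Fin k) (Fin c × Fin k) ℝ :=
  ![M1 c k, M2 c k, M3 c k]

noncomputable def Mmat_eigenvalues (c k : ℕ) (ε : ℝ) : Fin 3 → ℝ :=
  ![ε, (1 - 2 * ε) * k + ε, k * (1 - 2 * ε + ε * c) + ε]

theorem completeOrthogonalIdempotents_Mprojections {c k : ℕ} (hk : (k : ℝ) ≠ 0)
    (hc : (c : ℝ) ≠ 0) : CompleteOrthogonalIdempotents (Mprojections c k) := by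
  refine CompleteOrthogonalIdempotents.iff_ortho_complete.mpr ⟨?_, ?_⟩
  · intro i j hij
    fin_cases i <;> fin_cases j <;>
      simp [Mprojections, M1, M2, M3, sub_mul, mul_sub, Smat_mul_Smat, Jmat_mul_Jmat,
        Smat_mul_Jmat, Jmat_mul_Smat, smul_smul, hk, hc] at hij ⊢ <;>
      match_scalars <;> field_simp <;> ring
  · simp [Fin.sum_univ_three, Mprojections, M1, M2, M3]

theorem Mmat_eq_sum_smul {c k : ℕ} (hk : (k : ℝ) ≠ 0) (hc : (c : ℝ) ≠ 0) (ε : ℝ) :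
    Mmat c k ε = ∑ i, Mmat_eigenvalues c k ε i • Mprojections c k i := by
  simp only [Fin.sum_univ_three, Mmat_eigenvalues, Mprojections, Matrix.cons_val_zero,
    Matrix.cons_val_one, Matrix.cons_val, Mmat, M1, M2, M3]
  match_scalars <;> field_simp <;> ring

theorem Mmat_eigenvalues_pos {c k : ℕ} {ε : ℝ} (hε0 : 0 < ε) (hε : ε < 1 / 2)
    (i : Fin 3) : 0 < Mmat_eigenvalues c k ε i := by
  have h2ε : 0 < 1 - 2 * ε := by linarith
  fin_cases i <;> simp only [Mmat_eigenvalues, Fin.zero_eta, Fin.mk_one, Fin.reduceFinMk,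
    Matrix.cons_val_zero, Matrix.cons_val_one, Matrix.cons_val] <;> positivity

/-- For `0 < ε < 1/2`, the exact deviation of `M⁻²` from `ε⁻¹ M⁻¹` is supported on
the projections `M₂` and `M₃`. -/
theorem Mmat_inv_sq_deviation {c k : ℕ} (hk : 1 ≤ k) (hc : 1 ≤ c)
    (ε : ℝ) (hε0 : 0 < ε) (hε : ε < 1 / 2) :
    (Mmat c k ε)⁻¹ * (Mmat c k ε)⁻¹ - ε⁻¹ • (Mmat c k ε)⁻¹
      = (((1 - 2 * ε) * (k : ℝ) + ε)⁻¹ * (((1 - 2 * ε) * (k : ℝ) + ε)⁻¹ - ε⁻¹)) • M2 c k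
        + (((k : ℝ) * (1 - 2 * ε + ε * (c : ℝ)) + ε)⁻¹
            * (((k : ℝ) * (1 - 2 * ε + ε * (c : ℝ)) + ε)⁻¹ - ε⁻¹)) • M3 c k := by
  have hk0 : (k : ℝ) ≠ 0 := by positivity
  have hc0 : (c : ℝ) ≠ 0 := by positivity
  have he := completeOrthogonalIdempotents_Mprojections hk0 hc0
  have hinv : (Mmat c k ε)⁻¹ = ∑ i, (Mmat_eigenvalues c k ε i)⁻¹ • Mprojections c k i := by
    rw [Mmat_eq_sum_smul hk0 hc0, Matrix.inv_sum_smul_of_completeOrthogonalIdempotents he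
      fun i => (Mmat_eigenvalues_pos hε0 hε i).ne']
  rw [hinv, he.sum_smul_mul_sum_smul, Finset.smul_sum, ← Finset.sum_sub_distrib,
    Fin.sum_univ_three]
  simp only [Mmat_eigenvalues, Mprojections, Matrix.cons_val_zero, Matrix.cons_val_one,
    Matrix.cons_val]
  match_scalars <;> ring
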